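/- Let k_1,…,k_n be positive integers. Then ζ_𝒜(k_n,…,k_1) = (−1)^{k_1+⋯+k_n} · ζ_𝒜(k_1,…,k_n) in 𝒜. -/

import Mathlib

open scoped BigOperators

/-- The product of `ℤ/pℤ` over all primes `p`. -/
abbrev PreA : Type := ∀ p : Nat.Primes, ZMod p

/-- The ideal of families that vanish for all but finitely many primes. -/
def nullIdeal : Ideal PreA where
  carrier := {f | {p | f p ≠ 0}.Finite}
  zero_mem' := by simp
  add_mem' := by
    intro f g hf hg
    refine (hf.union hg).subset fun p hp => ?_
    by_contra hc
    simp only [Set.mem_union, Set.mem_setOf_eq, not_or, not_not] at hc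
    exact hp (by simp [Set.mem_setOf_eq, hc.1, hc.2])
  smul_mem' := by
    intro c f hf
    refine hf.subset fun p hp => ?_
    simp only [Set.mem_setOf_eq] at hp ⊢
    intro h0
    exact hp (by simp [h0])

/-- The ring `𝒜 = (∏_p ℤ/pℤ)/(⊕_p ℤ/pℤ)`. -/
abbrev A : Type := PreA ⧸ nullIdeal

/-- `zetaSum p ks b` is `∑_{b > m₁ > ⋯ > m_n ≥ 1} ∏ mᵢ^{-kᵢ}` in `ℤ/pℤ`. -/
def zetaSum (p : ℕ) : List ℕ → ℕ → ZMod p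
  | [], _ => 1
  | k :: ks, b => ∑ m ∈ Finset.Ico 1 b, ((m : ZMod p)⁻¹) ^ k * zetaSum p ks m

/-- `zetaStarSum p ks b` is `∑_{b > m₁ ≥ ⋯ ≥ m_n ≥ 1} ∏ mᵢ^{-kᵢ}` in `ℤ/pℤ`. -/
def zetaStarSum (p : ℕ) : List ℕ → ℕ → ZMod p
  | [], _ => 1
  | k :: ks, b => ∑ m ∈ Finset.Ico 1 b, ((m : ZMod p)⁻¹) ^ k * zetaStarSum p ks (m + 1)

/-- The finite multiple zeta value `ζ_𝒜(k₁,…,k_n)`. -/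
def zetaA (ks : List ℕ) : A :=
  Ideal.Quotient.mk nullIdeal (fun p => zetaSum p ks p)

/-- The finite multiple zeta-star value `ζ⋆_𝒜(k₁,…,k_n)`. -/
def zetaStarA (ks : List ℕ) : A :=
  Ideal.Quotient.mk nullIdeal (fun p => zetaStarSum p ks p)

/-- `ℋ¹ = ℚ⟨z₁,z₂,…⟩`, the noncommutative polynomial algebra on variables `z_k`, `k ≥ 1`. -/
abbrev H1 : Type := MonoidAlgebra ℚ (FreeMonoid ℕ+)

/-- The monomial (word) `z_{k₁} ⋯ z_{k_n}` in `ℋ¹`. -/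
noncomputable def word (w : List ℕ+) : H1 :=
  MonoidAlgebra.of ℚ (FreeMonoid ℕ+) (FreeMonoid.ofList w)

/-- Shuffle product on words (with values in `ℋ¹`). -/
noncomputable def shuffleW : List ℕ+ → List ℕ+ → H1
  | [], w => word w
  | v, [] => word v
  | k :: v, l :: w => word [k] * shuffleW v (l :: w) + word [l] * shuffleW (k :: v) w
  termination_by v w => v.length + w.length
  decreasing_by all_goals first | (simp; omega) | simp | omega

/-- The shuffle product `ш` on `ℋ¹`, as the bilinear extension of `shuffleW`. -/
noncomputable def shuffle (x y : H1) : H1 :=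
  Finsupp.sum x.coeff fun v c => Finsupp.sum y.coeff fun w c' =>
    (c * c') • shuffleW (FreeMonoid.toList v) (FreeMonoid.toList w)

/-- Harmonic product on words (with values in `ℋ¹`). -/
noncomputable def harmW : List ℕ+ → List ℕ+ → H1
  | [], w => word w
  | v, [] => word v
  | k :: v, l :: w =>
      word [k] * harmW v (l :: w) + word [l] * harmW (k :: v) w
        + word [k + l] * harmW v w
  termination_by v w => v.length + w.length
  decreasing_by all_goals first | (simp; omega) | simp | omega

/-- The harmonic product `*` on `ℋ¹`, as the bilinear extension of `harmW`. -/
noncomputable def harm (x y : H1) : H1 :=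
  Finsupp.sum x.coeff fun v c => Finsupp.sum y.coeff fun w c' =>
    (c * c') • harmW (FreeMonoid.toList v) (FreeMonoid.toList w)

/-- Star-harmonic product on words (with values in `ℋ¹`). -/
noncomputable def harmStarW : List ℕ+ → List ℕ+ → H1
  | [], w => word w
  | v, [] => word v
  | k :: v, l :: w =>
      word [k] * harmStarW v (l :: w) + word [l] * harmStarW (k :: v) w
        - word [k + l] * harmStarW v w
  termination_by v w => v.length + w.length
  decreasing_by all_goals first | (simp; omega) | simp | omega

/-- The product `∗̄` on `ℋ¹`, as the bilinear extension of `harmStarW`. -/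
noncomputable def harmStar (x y : H1) : H1 :=
  Finsupp.sum x.coeff fun v c => Finsupp.sum y.coeff fun w c' =>
    (c * c') • harmStarW (FreeMonoid.toList v) (FreeMonoid.toList w)

/-- The image of a rational number in `𝒜`. -/
def ratA (q : ℚ) : A :=
  Ideal.Quotient.mk nullIdeal (fun p => (q.num : ZMod p) * ((q.den : ZMod p))⁻¹)

/-- The `ℚ`-linear map `Z_𝒜 : ℋ¹ → 𝒜` sending `z_{k₁} ⋯ z_{k_n}` to `ζ_𝒜(k₁,…,k_n)`. -/
noncomputable def ZA (x : H1) : A :=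
  Finsupp.sum x.coeff fun w c => ratA c * zetaA ((FreeMonoid.toList w).map (fun k => (k : ℕ)))

/-- The `ℚ`-linear map `Z̄_𝒜 : ℋ¹ → 𝒜` sending `z_{k₁} ⋯ z_{k_n}` to `ζ⋆_𝒜(k₁,…,k_n)`. -/
noncomputable def ZSA (x : H1) : A :=
  Finsupp.sum x.coeff fun w c => ratA c * zetaStarA ((FreeMonoid.toList w).map (fun k => (k : ℕ)))

/-- Sum of a list of positive integers (equal to the actual sum for nonempty lists). -/
def psum : List ℕ+ → ℕ+
  | [] => 1
  | k :: t => t.foldl (· + ·) k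

/-- The map `d` on words: `d(z_{k₁}⋯z_{k_n}) = ∑_{m} ∑_{0=i₀<⋯<i_m=n}
`z_{k_{i₀+1}+⋯+k_{i₁}} ⋯ z_{k_{i_{m-1}+1}+⋯+k_{i_m}}`. -/
noncomputable def dW (w : List ℕ+) : H1 :=
  ∑ c : Composition w.length, word ((w.splitWrtComposition c).map psum)

/-- `z_a` for a tuple `a = (a₁,…,a_m; b₁,…,b_m; c₁,…,c_n) ∈ I_{m,n}`:
`∑_{σ,τ ∈ S_m} z_{a_{σ(1)}} z_{b_{τ(1)}} ⋯ z_{a_{σ(m)}} z_{b_{τ(m)}} ш z_{c₁} ш ⋯ ш z_{c_n}`. -/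
noncomputable def zTuple {m n : ℕ} (a b : Fin m → ℕ+) (c : Fin n → ℕ+) : H1 :=
  ∑ σ : Equiv.Perm (Fin m), ∑ τ : Equiv.Perm (Fin m),
    (List.ofFn c).foldl (fun w k => shuffle w (word [k]))
      (word ((List.ofFn (fun i => [a (σ i), b (τ i)])).flatten))

/-- The statement `P_{m,n}`: `Z_𝒜(z_a) = Z̄_𝒜(z_a) = 0` for all `a ∈ I_{m,n}`. -/
def Pmn (m n : ℕ) : Prop :=
  ∀ (a b : Fin m → ℕ+) (c : Fin n → ℕ+),
    (∀ i, Odd (a i : ℕ)) → (∀ i, Odd (b i : ℕ)) → (∀ j, Even (c j : ℕ)) →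
    ZA (zTuple a b c) = 0 ∧ ZSA (zTuple a b c) = 0

/-- The list `{c}^{n₀}, a, {c}^{n₁}, b, {c}^{n₂}, …, a, {c}^{n_{2m-1}}, b, {c}^{n_{2m}}`. -/
def bbList (a b c : ℕ) (m : ℕ) (f : Fin (2 * m + 1) → ℕ) : List ℕ :=
  (List.ofFn (fun j : Fin m =>
      List.replicate (f ⟨2 * j.val, by have := j.isLt; omega⟩) c ++ [a]
        ++ List.replicate (f ⟨2 * j.val + 1, by have := j.isLt; omega⟩) c ++ [b])).flatten
    ++ List.replicate (f ⟨2 * m, by omega⟩) c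

/-! Substituting `m ↦ p - m` for every summation index reverses the order of the indices,
and since `p - m ≡ -m (mod p)` it multiplies the term `∏ mᵢ^{-kᵢ}` by `(-1)^{k₁+⋯+k_n}`. -/

/-- `nestedSum w ks a b = ∑_{b > m₁ > ⋯ > m_n ≥ a} ∏ᵢ w(mᵢ)^{kᵢ}` for `ks = [k₁, …, k_n]`. -/
def nestedSum {R : Type*} [CommSemiring R] (w : ℕ → R) : List ℕ → ℕ → ℕ → R
  | [], _, _ => 1
  | k :: ks, a, b => ∑ m ∈ Finset.Ico a b, w m ^ k * nestedSum w ks a m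

section

variable {R : Type*}

theorem nestedSum_append_singleton [CommSemiring R] (w : ℕ → R) (ks : List ℕ) (k a b : ℕ) :
    nestedSum w (ks ++ [k]) a b =
      ∑ m ∈ Finset.Ico a b, w m ^ k * nestedSum w ks (m + 1) b := by
  induction ks generalizing b with
  | nil => simp [nestedSum]
  | cons l ks ih =>
    calc nestedSum w (l :: ks ++ [k]) a b
        = ∑ m₁ ∈ Finset.Ico a b, ∑ m ∈ Finset.Ico a m₁,
            w m₁ ^ l * (w m ^ k * nestedSum w ks (m + 1) m₁) := by
          simp only [List.cons_append, nestedSum, ih, Finset.mul_sum]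
      _ = ∑ m ∈ Finset.Ico a b, ∑ m₁ ∈ Finset.Ico (m + 1) b,
            w m₁ ^ l * (w m ^ k * nestedSum w ks (m + 1) m₁) :=
          (Finset.sum_Ico_Ico_comm' a b _).symm
      _ = _ := by
          simp only [nestedSum, Finset.mul_sum]
          refine Finset.sum_congr rfl fun m _ => Finset.sum_congr rfl fun m₁ _ => ?_
          ring

theorem nestedSum_reverse [CommSemiring R] (w : ℕ → R) (ks : List ℕ) {a b c : ℕ}
    (ha : 1 ≤ a) (hb : b ≤ c) :
    nestedSum w ks.reverse a b = nestedSum (fun m => w (c - m)) ks (c - b + 1) (c - a + 1) := by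
  induction ks generalizing a with
  | nil => rfl
  | cons k ks ih =>
    rw [List.reverse_cons, nestedSum_append_singleton, nestedSum]
    refine Finset.sum_nbij' (c - ·) (c - ·) ?_ ?_ ?_ ?_ fun m hm => ?_
    all_goals simp only [Finset.mem_Ico] at *
    iterate 4 (intro m hm; omega)
    rw [ih (by omega), Nat.sub_sub_self (by omega), show c - (m + 1) + 1 = c - m by omega]

theorem nestedSum_eq_neg_one_pow_mul [CommRing R] {w w' : ℕ → R} (ks : List ℕ) {a b : ℕ}
    (hw : ∀ m, a ≤ m → m < b → w' m = -w m) :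
    nestedSum w' ks a b = (-1) ^ ks.sum * nestedSum w ks a b := by
  induction ks generalizing b with
  | nil => simp [nestedSum]
  | cons k ks ih =>
    simp only [nestedSum, Finset.mul_sum, List.sum_cons]
    refine Finset.sum_congr rfl fun m hm => ?_
    obtain ⟨ham, hmb⟩ := Finset.mem_Ico.mp hm
    rw [hw m ham hmb, ih fun m' ha' hm' => hw m' ha' (hm'.trans hmb), neg_pow, pow_add]
    ring

end

theorem zetaSum_eq_nestedSum (p : ℕ) (ks : List ℕ) (b : ℕ) :
    zetaSum p ks b = nestedSum (fun m => (m : ZMod p)⁻¹) ks 1 b := by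
  induction ks generalizing b with
  | nil => rfl
  | cons k ks ih => simp [zetaSum, nestedSum, ih]

theorem zetaSum_reverse {p : ℕ} (hp : p.Prime) (ks : List ℕ) :
    zetaSum p ks.reverse p = (-1) ^ ks.sum * zetaSum p ks p := by
  have := Fact.mk hp
  have hrefl : ∀ m, 1 ≤ m → m < p → ((p - m : ℕ) : ZMod p)⁻¹ = -(m : ZMod p)⁻¹ := fun m _ hm => by
    rw [Nat.cast_sub hm.le, ZMod.natCast_self, zero_sub, inv_neg]
  rw [zetaSum_eq_nestedSum, zetaSum_eq_nestedSum, nestedSum_reverse _ ks le_rfl le_rfl,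
    Nat.sub_self, Nat.sub_add_cancel hp.one_le,
    nestedSum_eq_neg_one_pow_mul ks hrefl]

theorem zetaA_reverse (ks : List ℕ) :
    zetaA ks.reverse = (-1 : A) ^ ks.sum * zetaA ks := by
  have hprimes : (fun p : Nat.Primes => zetaSum p ks.reverse p)
      = (-1 : PreA) ^ ks.sum * fun p : Nat.Primes => zetaSum p ks p := by
    funext p
    simpa using zetaSum_reverse p.prop ks
  rw [zetaA, zetaA, hprimes, map_mul, map_pow, map_neg, map_one]
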